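/- The complex K_• (defined via the free S-modules on generators Φ(a_1,...,a_θ) with differential d = Σ d_i as above), augmented by the counit ε : S → k in degree −1, is exact; that is, K_• is a free resolution of the trivial module k over the quantum complete intersection S. -/

import Mathlib

open FreeAlgebra

variable (k : Type) [Field k]

/-- Relations of a quantum complete intersection. -/
inductive qciRel (θ : ℕ) (N : Fin θ → ℕ) (q : Fin θ → Fin θ → kˣ) :
    FreeAlgebra k (Fin θ) → FreeAlgebra k (Fin θ) → Prop
  | comm (i j : Fin θ) (hij : i < j) :
      qciRel θ N q (ι k i * ι k j) ((q i j : k) • (ι k j * ι k i))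
  | nil (i : Fin θ) : qciRel θ N q (ι k i ^ N i) 0

/-- The quantum complete intersection algebra `S`. -/
abbrev QCI (θ : ℕ) (N : Fin θ → ℕ) (q : Fin θ → Fin θ → kˣ) : Type :=
  RingQuot (qciRel k θ N q)

/-- The augmentation of `S`, sending each generator to `0`. -/
noncomputable def qciAug (θ : ℕ) (N : Fin θ → ℕ) (q : Fin θ → Fin θ → kˣ)
    (hN : ∀ i, N i ≠ 0) : QCI k θ N q →ₐ[k] k :=
  RingQuot.liftAlgHom k ⟨FreeAlgebra.lift k (fun _ => (0 : k)), by
    rintro a b (⟨i, j, hij⟩ | ⟨i⟩) <;> simp [zero_pow (hN _)]⟩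

variable (θ : ℕ) (N : Fin θ → ℕ) (q : Fin θ → Fin θ → kˣ)

/-- The generator `x_i` of `S`. -/
noncomputable def xgen (i : Fin θ) : QCI k θ N q :=
  RingQuot.mkAlgHom k (qciRel k θ N q) (ι k i)

/-- `σ_i(a) = 1` if `a` is odd, `N_i - 1` if `a` is even. -/
def sigmaExp (Ni a : ℕ) : ℕ := if Odd a then 1 else Ni - 1

/-- `τ_i(a) = Σ_{j=1}^a σ_i(j)`, `τ_i(0) = 0`. -/
def tauExp (Ni a : ℕ) : ℕ := ∑ j ∈ Finset.range a, sigmaExp Ni (j + 1)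

/-- Right multiplication by an element, as a left `S`-linear endomorphism. -/
noncomputable def rmul (c : QCI k θ N q) : QCI k θ N q →ₗ[QCI k θ N q] QCI k θ N q where
  toFun s := s * c
  map_add' a b := add_mul a b c
  map_smul' a b := by simp [smul_eq_mul, mul_assoc]

/-- The scalar `∏_{ℓ<i} (-1)^{a_ℓ} q_{ℓi}^{σ_i(a_i) τ_ℓ(a_ℓ)}`. -/
noncomputable def dCoeff (i : Fin θ) (a : Fin θ → ℕ) : k :=
  ∏ ℓ ∈ Finset.univ.filter (fun ℓ : Fin θ => ℓ < i),
    ((-1 : k) ^ (a ℓ) * (q ℓ i : k) ^ (sigmaExp (N i) (a i) * tauExp (N ℓ) (a ℓ)))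

/-- Index set for the degree `n` part of the Koszul-type complex:
`θ`-tuples of nonnegative integers summing to `n`. -/
def Idx (n : ℕ) : Type := {a : Fin θ → ℕ // ∑ i, a i = n}

/-- The degree `n` term `K_n = ⊕_{a_1+⋯+a_θ = n} S·Φ(a_1,…,a_θ)`. -/
abbrev KnMod (n : ℕ) : Type := Idx θ n →₀ QCI k θ N q

/-- The component `d_i` of the differential in degree `n + 1`. -/
noncomputable def dgr (i : Fin θ) (n : ℕ) :
    KnMod k θ N q (n + 1) →ₗ[QCI k θ N q] KnMod k θ N q n :=
  Finsupp.lsum ℕ fun a =>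
    if h : a.1 i = 0 then 0
    else (Finsupp.lsingle (⟨Function.update a.1 i (a.1 i - 1), by
        have h2 := Finset.add_sum_erase Finset.univ a.1 (Finset.mem_univ i)
        have h3 := Finset.add_sum_erase Finset.univ
          (Function.update a.1 i (a.1 i - 1)) (Finset.mem_univ i)
        have h4 : ∑ x ∈ Finset.univ.erase i, Function.update a.1 i (a.1 i - 1) x =
            ∑ x ∈ Finset.univ.erase i, a.1 x :=
          Finset.sum_congr rfl fun x hx =>
            Function.update_of_ne (Finset.ne_of_mem_erase hx) _ _
        have h5 : Function.update a.1 i (a.1 i - 1) i = a.1 i - 1 :=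
          Function.update_self _ _ _
        have h6 := a.2
        rw [h4, h5] at h3
        omega⟩ : Idx θ n)).comp
      (rmul k θ N q
        (algebraMap k (QCI k θ N q) (dCoeff k θ N q i a.1) *
          xgen k θ N q i ^ sigmaExp (N i) (a.1 i)))

/-- The total differential `d = d_1 + ⋯ + d_θ` in degree `n + 1`. -/
noncomputable def dTot (n : ℕ) :
    KnMod k θ N q (n + 1) →ₗ[QCI k θ N q] KnMod k θ N q n :=
  ∑ i, dgr k θ N q i n

/-!
The monomials `x^b` with `b < N` form a `k`-basis of `S`: they span by straightening, and they
are independent because they act freely on the vacuum of an explicit model of left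
multiplication. Hence the `x^b Φ(a)` form a `k`-basis of `K_•`, on which `d_i` is a nonzero
multiple of the shift `(a, b) ↦ (a - e_i, b + σ_i(a_i) e_i)`, and the scalars of `d_i d_j` and
`d_j d_i` cancel, so `d² = 0`.

The contracting homotopy `s` sends `x^b Φ(a)` to `s_i(x^b Φ(a))` for the first coordinate `i`
with `(a_i, b_i) ≠ (0, 0)`, where `s_i` inverts the shift of `d_i` if `b_i ≥ σ_i(a_i + 1)` and
vanishes otherwise. As `σ_i(t) + σ_i(t + 1) = N_i`, `d_i s + s d_i` is the identity on
`x^b Φ(a)`, while for `j ≠ i` the two terms of `d_j s + s d_j` cancel by the same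
anticommutation of scalars. So `d s + s d = 1` in positive degrees and `d s + η ε = 1` in
degree `0`, which gives exactness.
-/

open Function

theorem Function.Exact.of_homotopy {M₁ M₂ M₃ : Type*} [AddZeroClass M₂] [Zero M₃]
    {f : M₁ → M₂} {g : M₂ → M₃} (hgf : ∀ x, g (f x) = 0) (h : M₂ → M₁) (s : M₃ → M₂)
    (hs : s 0 = 0) (hid : ∀ y, f (h y) + s (g y) = y) : Function.Exact f g := fun y =>
  ⟨fun hy => ⟨h y, by simpa [hy, hs] using hid y⟩, by rintro ⟨x, rfl⟩; exact hgf x⟩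

theorem Finset.sum_sum_eq_zero_of_antisymm {ι M : Type*} [Fintype ι] [LinearOrder ι]
    [AddCommMonoid M] (F : ι → ι → M) (hdiag : ∀ i, F i i = 0)
    (hanti : ∀ i j, i < j → F i j + F j i = 0) : ∑ i, ∑ j, F i j = 0 := by
  rw [← Finset.sum_product']
  refine Finset.sum_involution (fun p _ => p.swap) (fun p _ => ?_) (fun p _ hp hswap => ?_)
    (by simp) (by simp)
  · rcases lt_trichotomy p.1 p.2 with h | h | h
    · exact hanti _ _ h
    · simp [h, hdiag]
    · rw [add_comm]; exact hanti _ _ h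
  · obtain ⟨i, j⟩ := p
    obtain rfl : i = j := (Prod.ext_iff.mp hswap).2
    exact hp (hdiag i)

namespace QCI

variable {k : Type} [Field k] {θ : ℕ} {N : Fin θ → ℕ} {q : Fin θ → Fin θ → kˣ}

theorem xgen_mul_xgen_of_lt {i j : Fin θ} (hij : i < j) :
    xgen k θ N q i * xgen k θ N q j = (q i j : k) • (xgen k θ N q j * xgen k θ N q i) := by
  simpa [xgen] using RingQuot.mkAlgHom_rel k (qciRel.comm (N := N) (q := q) i j hij)

theorem xgen_pow_eq_zero {i : Fin θ} {s : ℕ} (hs : N i ≤ s) : xgen k θ N q i ^ s = 0 := by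
  have hnil : xgen k θ N q i ^ N i = 0 := by
    simpa [xgen] using RingQuot.mkAlgHom_rel k (qciRel.nil (k := k) (N := N) (q := q) i)
  rw [← Nat.add_sub_cancel' hs, pow_add, hnil, zero_mul]

theorem xgen_pow_mul_xgen_of_lt {i j : Fin θ} (hij : i < j) (t : ℕ) :
    xgen k θ N q j ^ t * xgen k θ N q i
      = (q i j : k)⁻¹ ^ t • (xgen k θ N q i * xgen k θ N q j ^ t) := by
  have hswap : xgen k θ N q j * xgen k θ N q i
      = (q i j : k)⁻¹ • (xgen k θ N q i * xgen k θ N q j) := by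
    rw [xgen_mul_xgen_of_lt hij, smul_smul, inv_mul_cancel₀ (Units.ne_zero _), one_smul]
  induction t with
  | zero => simp
  | succ t ih =>
    rw [pow_succ, mul_assoc, hswap, mul_smul_comm, ← mul_assoc, ih, smul_mul_assoc, smul_smul,
      mul_assoc, ← pow_succ, ← pow_succ']

noncomputable def monomial (N : Fin θ → ℕ) (q : Fin θ → Fin θ → kˣ) (b : Fin θ → ℕ) :
    QCI k θ N q :=
  ((List.finRange θ).map fun ℓ => xgen k θ N q ℓ ^ b ℓ).prod

theorem monomial_zero : monomial N q (0 : Fin θ → ℕ) = 1 :=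
  List.prod_eq_one (by simp)

theorem monomial_eq_zero {b : Fin θ → ℕ} {i : Fin θ} (h : N i ≤ b i) :
    monomial N q b = 0 :=
  List.prod_eq_zero (List.mem_map.mpr ⟨i, List.mem_finRange i, xgen_pow_eq_zero h⟩)

/-- Scalar produced by moving `x_i ^ t` to its place in the ordered monomial `x ^ b`. -/
noncomputable def reorderCoeff (q : Fin θ → Fin θ → kˣ) (i : Fin θ) (t : ℕ) (b : Fin θ → ℕ) :
    k :=
  ∏ ℓ, if i < ℓ then (q i ℓ : k)⁻¹ ^ (t * b ℓ) else 1

theorem list_prod_mul_xgen_of_forall_lt (i : Fin θ) (b : Fin θ → ℕ) (L : List (Fin θ))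
    (hL : ∀ ℓ ∈ L, i < ℓ) :
    (L.map fun ℓ => xgen k θ N q ℓ ^ b ℓ).prod * xgen k θ N q i
      = (L.map fun ℓ => if i < ℓ then (q i ℓ : k)⁻¹ ^ b ℓ else 1).prod •
        (xgen k θ N q i * (L.map fun ℓ => xgen k θ N q ℓ ^ b ℓ).prod) := by
  induction L with
  | nil => simp
  | cons a L ih =>
    simp only [List.map_cons, List.prod_cons, List.forall_mem_cons] at hL ⊢
    rw [mul_assoc, ih hL.2, mul_smul_comm, ← mul_assoc, xgen_pow_mul_xgen_of_lt hL.1,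
      smul_mul_assoc, smul_smul, mul_assoc, if_pos hL.1, mul_comm]

theorem list_prod_mul_xgen (i : Fin θ) (b : Fin θ → ℕ) (L : List (Fin θ))
    (hL : L.Pairwise (· < ·)) (hi : i ∈ L) :
    (L.map fun ℓ => xgen k θ N q ℓ ^ b ℓ).prod * xgen k θ N q i
      = (L.map fun ℓ => if i < ℓ then (q i ℓ : k)⁻¹ ^ b ℓ else 1).prod •
        (L.map fun ℓ => xgen k θ N q ℓ ^ update b i (b i + 1) ℓ).prod := by
  induction L with
  | nil => simp at hi
  | cons a L ih =>
    rw [List.pairwise_cons] at hL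
    simp only [List.map_cons, List.prod_cons]
    rcases List.mem_cons.mp hi with rfl | hi
    · have hL' : (L.map fun ℓ => xgen k θ N q ℓ ^ update b i (b i + 1) ℓ)
          = L.map fun ℓ => xgen k θ N q ℓ ^ b ℓ :=
        List.map_congr_left fun ℓ hℓ => by rw [update_of_ne (hL.1 ℓ hℓ).ne']
      rw [mul_assoc, list_prod_mul_xgen_of_forall_lt i b L hL.1, mul_smul_comm, ← mul_assoc,
        ← pow_succ, hL', update_self, if_neg (lt_irrefl i), one_mul]
    · have hai : a < i := hL.1 i hi
      rw [mul_assoc, ih hL.2 hi, mul_smul_comm, update_of_ne hai.ne, if_neg hai.not_gt, one_mul]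

theorem monomial_mul_xgen (i : Fin θ) (b : Fin θ → ℕ) :
    monomial N q b * xgen k θ N q i
      = reorderCoeff q i 1 b • monomial N q (update b i (b i + 1)) := by
  rw [monomial, list_prod_mul_xgen i b _ (List.pairwise_lt_finRange θ) (List.mem_finRange i),
    ← Fin.prod_univ_def]
  simp [reorderCoeff, monomial]

theorem reorderCoeff_ne_zero (i : Fin θ) (t : ℕ) (b : Fin θ → ℕ) : reorderCoeff q i t b ≠ 0 :=
  Finset.prod_ne_zero_iff.mpr fun ℓ _ => by
    split_ifs
    exacts [pow_ne_zero _ (inv_ne_zero (Units.ne_zero _)), one_ne_zero]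

theorem reorderCoeff_add (i : Fin θ) (t s : ℕ) (b : Fin θ → ℕ) :
    reorderCoeff q i (t + s) b = reorderCoeff q i t b * reorderCoeff q i s b := by
  simp only [reorderCoeff, ← Finset.prod_mul_distrib]
  refine Finset.prod_congr rfl fun ℓ _ => ?_
  split_ifs <;> simp [add_mul, pow_add]

theorem reorderCoeff_update_of_le {i j : Fin θ} (hij : j ≤ i) (t : ℕ) (b : Fin θ → ℕ) (v : ℕ) :
    reorderCoeff q i t (update b j v) = reorderCoeff q i t b := by
  refine Finset.prod_congr rfl fun ℓ _ => ?_
  rcases eq_or_ne ℓ j with rfl | h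
  · simp [not_lt_of_ge hij]
  · rw [update_of_ne h]

theorem reorderCoeff_update_add_of_lt {i j : Fin θ} (hij : i < j) (t : ℕ) (b : Fin θ → ℕ)
    (s : ℕ) :
    reorderCoeff q i t (update b j (b j + s))
      = reorderCoeff q i t b * (q i j : k)⁻¹ ^ (t * s) := by
  simp only [reorderCoeff, ← Finset.mul_prod_erase _ _ (Finset.mem_univ j), update_self,
    if_pos hij, mul_add, pow_add]
  rw [mul_right_comm]
  congr 2
  exact Finset.prod_congr rfl fun ℓ hℓ => by rw [update_of_ne (Finset.ne_of_mem_erase hℓ)]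

theorem monomial_mul_xgen_pow (i : Fin θ) (t : ℕ) (b : Fin θ → ℕ) :
    monomial N q b * xgen k θ N q i ^ t
      = reorderCoeff q i t b • monomial N q (update b i (b i + t)) := by
  induction t with
  | zero => simp [reorderCoeff]
  | succ t ih =>
    rw [pow_succ, ← mul_assoc, ih, smul_mul_assoc, monomial_mul_xgen, smul_smul,
      reorderCoeff_update_of_le le_rfl, ← reorderCoeff_add, update_idem, update_self, add_assoc]

theorem monomial_mem_span (b : Fin θ → ℕ) :
    monomial N q b ∈ Submodule.span k
      (Set.range fun c : (i : Fin θ) → Fin (N i) => monomial N q fun i => c i) := by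
  by_cases hb : ∀ i, b i < N i
  · exact Submodule.subset_span ⟨fun i => ⟨b i, hb i⟩, rfl⟩
  · obtain ⟨i, hi⟩ := not_forall.mp hb
    rw [monomial_eq_zero (not_lt.mp hi)]
    exact Submodule.zero_mem _

theorem span_monomial_eq_top :
    Submodule.span k
      (Set.range fun c : (i : Fin θ) → Fin (N i) => monomial N q fun i => c i) = ⊤ := by
  set W := Submodule.span k
    (Set.range fun c : (i : Fin θ) → Fin (N i) => monomial N q fun i => c i)
  have mul_xgen_mem (i : Fin θ) {w : QCI k θ N q} (hw : w ∈ W) : w * xgen k θ N q i ∈ W := by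
    induction hw using Submodule.span_induction with
    | mem x hx =>
      obtain ⟨c, rfl⟩ := hx
      rw [monomial_mul_xgen]
      exact Submodule.smul_mem _ _ (monomial_mem_span _)
    | zero => simp
    | add x y _ _ hx hy => rw [add_mul]; exact add_mem hx hy
    | smul c x _ hx => rw [smul_mul_assoc]; exact Submodule.smul_mem _ _ hx
  have mul_mem (y : FreeAlgebra k (Fin θ)) :
      ∀ w ∈ W, w * RingQuot.mkAlgHom k (qciRel k θ N q) y ∈ W := by
    induction y using FreeAlgebra.induction with
    | grade0 r =>
      intro w hw
      rw [AlgHom.commutes, Algebra.algebraMap_eq_smul_one, mul_smul_comm, mul_one]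
      exact Submodule.smul_mem _ _ hw
    | grade1 i => exact fun w hw => mul_xgen_mem i hw
    | mul a b ha hb => exact fun w hw => by rw [map_mul, ← mul_assoc]; exact hb _ (ha w hw)
    | add a b ha hb => exact fun w hw => by rw [map_add, mul_add]; exact add_mem (ha w hw) (hb w hw)
  refine eq_top_iff.mpr fun s _ => ?_
  obtain ⟨y, rfl⟩ := RingQuot.mkAlgHom_surjective k (qciRel k θ N q) s
  have one_mem : (1 : QCI k θ N q) ∈ W := monomial_zero (N := N) (q := q) ▸ monomial_mem_span 0
  simpa using mul_mem y 1 one_mem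

/-- Scalar in `x_i x^b = leftCoeff q i b • x^(b + e_i)`. -/
noncomputable def leftCoeff (q : Fin θ → Fin θ → kˣ) (i : Fin θ) (b : Fin θ → ℕ) : k :=
  ∏ ℓ, if ℓ < i then (q ℓ i : k)⁻¹ ^ b ℓ else 1

/-- A model of left multiplication by `x_i` on the span of the monomials `x^b`, `b < N`. -/
noncomputable def shiftOp (N : Fin θ → ℕ) (q : Fin θ → Fin θ → kˣ) (i : Fin θ) :
    Module.End k ((Fin θ → ℕ) →₀ k) :=
  Finsupp.lsum k fun b =>
    if b i + 1 < N i then leftCoeff q i b • Finsupp.lsingle (update b i (b i + 1)) else 0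

theorem shiftOp_single (i : Fin θ) (b : Fin θ → ℕ) (c : k) :
    shiftOp N q i (Finsupp.single b c)
      = if b i + 1 < N i then Finsupp.single (update b i (b i + 1)) (leftCoeff q i b * c)
        else 0 := by
  rw [shiftOp, Finsupp.lsum_single]
  split_ifs <;> simp [Finsupp.smul_single]

theorem leftCoeff_update_of_not_lt {i j : Fin θ} (h : ¬ j < i) (b : Fin θ → ℕ) (v : ℕ) :
    leftCoeff q i (update b j v) = leftCoeff q i b := by
  refine Finset.prod_congr rfl fun ℓ _ => ?_
  rcases eq_or_ne ℓ j with rfl | hℓ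
  · simp [h]
  · rw [update_of_ne hℓ]

theorem leftCoeff_update_succ_of_lt {i j : Fin θ} (h : j < i) (b : Fin θ → ℕ) :
    leftCoeff q i (update b j (b j + 1)) = (q j i : k)⁻¹ * leftCoeff q i b := by
  simp only [leftCoeff, ← Finset.mul_prod_erase _ _ (Finset.mem_univ j), update_self, if_pos h,
    pow_succ, mul_comm _ (q j i : k)⁻¹, mul_assoc]
  congr 2
  exact Finset.prod_congr rfl fun ℓ hℓ => by rw [update_of_ne (Finset.ne_of_mem_erase hℓ)]

theorem leftCoeff_eq_one {i : Fin θ} {b : Fin θ → ℕ} (h : ∀ ℓ < i, b ℓ = 0) :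
    leftCoeff q i b = 1 :=
  Finset.prod_eq_one fun ℓ _ => by
    split_ifs with hℓ
    exacts [by rw [h ℓ hℓ, pow_zero], rfl]

theorem shiftOp_mul_shiftOp_of_lt {i j : Fin θ} (hij : i < j) :
    shiftOp N q i * shiftOp N q j = (q i j : k) • (shiftOp N q j * shiftOp N q i) := by
  refine Finsupp.lhom_ext fun b c => ?_
  have hji : j ≠ i := hij.ne'
  simp only [LinearMap.smul_apply, Module.End.mul_apply, shiftOp_single]
  by_cases hj : b j + 1 < N j <;> by_cases hi : b i + 1 < N i <;>
    simp only [hi, hj, if_true, if_false, map_zero, smul_zero, shiftOp_single, update_of_ne hji,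
      update_of_ne hji.symm]
  rw [update_comm hji, leftCoeff_update_of_not_lt hij.not_gt, leftCoeff_update_succ_of_lt hij,
    Finsupp.smul_single, smul_eq_mul]
  congr 1
  field_simp

theorem shiftOp_pow_single (i : Fin θ) (t : ℕ) (b : Fin θ → ℕ) (c : k) :
    (shiftOp N q i ^ t) (Finsupp.single b c)
      = if b i + t < N i ∨ t = 0 then
          Finsupp.single (update b i (b i + t)) (leftCoeff q i b ^ t * c)
        else 0 := by
  induction t with
  | zero => simp
  | succ t ih =>
    rw [pow_succ', Module.End.mul_apply, ih]
    by_cases ht : b i + t < N i ∨ t = 0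
    · rw [if_pos ht, shiftOp_single, update_self, update_idem,
        leftCoeff_update_of_not_lt (lt_irrefl i)]
      by_cases ht' : b i + t + 1 < N i
      · rw [if_pos ht', if_pos (by omega), pow_succ]
        congr 1
        ring
      · rw [if_neg ht', if_neg (by omega)]
    · rw [if_neg ht, map_zero, if_neg (by omega)]

theorem shiftOp_pow_eq_zero (hN : ∀ i, N i ≠ 0) (i : Fin θ) : shiftOp N q i ^ N i = 0 :=
  Finsupp.lhom_ext fun b c => by
    rw [shiftOp_pow_single, if_neg (by have := hN i; omega), LinearMap.zero_apply]

noncomputable def monomialRep (hN : ∀ i, N i ≠ 0) :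
    QCI k θ N q →ₐ[k] Module.End k ((Fin θ → ℕ) →₀ k) :=
  RingQuot.liftAlgHom k ⟨FreeAlgebra.lift k (shiftOp N q), by
    rintro _ _ (⟨i, j, hij⟩ | ⟨i⟩)
    · simpa using shiftOp_mul_shiftOp_of_lt hij
    · simpa using shiftOp_pow_eq_zero hN i⟩

theorem monomialRep_xgen (hN : ∀ i, N i ≠ 0) (i : Fin θ) :
    monomialRep hN (xgen k θ N q i) = shiftOp N q i := by
  rw [xgen, monomialRep, RingQuot.liftAlgHom_mkAlgHom_apply, FreeAlgebra.lift_ι_apply]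

theorem list_prod_shiftOp_pow_single_zero (b : Fin θ → ℕ) (L : List (Fin θ))
    (hL : L.Pairwise (· < ·)) (hb : ∀ ℓ ∈ L, b ℓ < N ℓ) :
    (L.map fun ℓ => shiftOp N q ℓ ^ b ℓ).prod (Finsupp.single 0 1)
      = Finsupp.single (fun m => if m ∈ L then b m else 0) 1 := by
  induction L with
  | nil => simp; rfl
  | cons a L ih =>
    rw [List.pairwise_cons] at hL
    rw [List.forall_mem_cons] at hb
    have ha : a ∉ L := fun h => lt_irrefl a (hL.1 a h)
    simp only [List.map_cons, List.prod_cons, Module.End.mul_apply, ih hL.2 hb.2,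
      shiftOp_pow_single, if_neg ha, zero_add]
    rw [if_pos (Or.inl hb.1), leftCoeff_eq_one, one_pow, mul_one]
    · congr 1
      funext m
      rcases eq_or_ne m a with rfl | hm
      · simp
      · simp [hm]
    · intro ℓ hℓ
      rw [if_neg fun h => (hL.1 ℓ h).not_gt hℓ]

theorem monomialRep_monomial (hN : ∀ i, N i ≠ 0) (b : Fin θ → ℕ) (hb : ∀ i, b i < N i) :
    monomialRep hN (monomial N q b) (Finsupp.single 0 1) = Finsupp.single b 1 := by
  rw [monomial, map_list_prod, List.map_map]
  simp only [Function.comp_def, map_pow, monomialRep_xgen]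
  rw [list_prod_shiftOp_pow_single_zero b _ (List.pairwise_lt_finRange θ) fun ℓ _ => hb ℓ]
  simp

theorem linearIndependent_monomial (hN : ∀ i, N i ≠ 0) :
    LinearIndependent k fun c : (i : Fin θ) → Fin (N i) => monomial N q fun i => c i := by
  refine LinearIndependent.of_comp
    ((LinearMap.applyₗ (Finsupp.single 0 1)).comp (monomialRep hN).toLinearMap) ?_
  have hcomp : (((LinearMap.applyₗ (Finsupp.single 0 1)).comp (monomialRep hN).toLinearMap) ∘
      fun c : (i : Fin θ) → Fin (N i) => monomial N q fun i => c i)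
      = Finsupp.basisSingleOne ∘ fun c i => (c i : ℕ) := by
    funext c
    simp [monomialRep_monomial hN _ fun i => (c i).isLt]
  rw [hcomp]
  exact Finsupp.basisSingleOne.linearIndependent.comp _ fun c c' h =>
    funext fun i => Fin.ext (congrFun h i)

noncomputable def monomialBasis (hN : ∀ i, N i ≠ 0) :
    Module.Basis ((i : Fin θ) → Fin (N i)) k (QCI k θ N q) :=
  Module.Basis.mk (linearIndependent_monomial hN) span_monomial_eq_top.ge

theorem monomialBasis_apply (hN : ∀ i, N i ≠ 0) (c : (i : Fin θ) → Fin (N i)) :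
    monomialBasis (q := q) hN c = monomial N q fun i => c i :=
  Module.Basis.mk_apply _ _ _

end QCI

section Coefficients

variable {k : Type} [Field k] {θ : ℕ} {N : Fin θ → ℕ} {q : Fin θ → Fin θ → kˣ}

theorem sigmaExp_add_sigmaExp_succ {m : ℕ} (hm : m ≠ 0) (t : ℕ) :
    sigmaExp m t + sigmaExp m (t + 1) = m := by
  rcases Nat.even_or_odd t with ht | ht
  · rw [sigmaExp, sigmaExp, if_neg (Nat.not_odd_iff_even.mpr ht), if_pos ht.add_one]
    omega
  · rw [sigmaExp, sigmaExp, if_pos ht, if_neg (Nat.not_odd_iff_even.mpr ht.add_one)]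
    omega

theorem one_le_sigmaExp {m : ℕ} (hm : 2 ≤ m) (t : ℕ) : 1 ≤ sigmaExp m t := by
  unfold sigmaExp
  split_ifs <;> omega

theorem sigmaExp_one (m : ℕ) : sigmaExp m 1 = 1 := if_pos odd_one

theorem dCoeff_ne_zero (i : Fin θ) (a : Fin θ → ℕ) : dCoeff k θ N q i a ≠ 0 :=
  Finset.prod_ne_zero_iff.mpr fun _ _ =>
    mul_ne_zero (pow_ne_zero _ (neg_ne_zero.mpr one_ne_zero)) (pow_ne_zero _ (Units.ne_zero _))

theorem dCoeff_update_of_lt {i j : Fin θ} (hij : i < j) (a : Fin θ → ℕ) (v : ℕ) :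
    dCoeff k θ N q i (update a j v) = dCoeff k θ N q i a := by
  refine Finset.prod_congr rfl fun ℓ hℓ => ?_
  have hℓj : ℓ ≠ j := ((Finset.mem_filter.mp hℓ).2.trans hij).ne
  rw [update_of_ne hℓj, update_of_ne hij.ne]

theorem dCoeff_update_pred {i j : Fin θ} (hij : i < j) {a : Fin θ → ℕ} (ha : a i ≠ 0) :
    dCoeff k θ N q j (update a i (a i - 1))
        * (q i j : k) ^ (sigmaExp (N j) (a j) * sigmaExp (N i) (a i))
      = - dCoeff k θ N q j a := by
  -- the factor `(-1)^{a_i}` changes sign and `τ_i(a_i) = τ_i(a_i - 1) + σ_i(a_i)`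
  obtain ⟨t, ht⟩ : ∃ t, a i = t + 1 := ⟨a i - 1, by omega⟩
  have hmem : i ∈ Finset.univ.filter (· < j) := Finset.mem_filter.mpr ⟨Finset.mem_univ i, hij⟩
  have hrest : ∀ ℓ ∈ (Finset.univ.filter (· < j)).erase i,
      (-1 : k) ^ update a i (a i - 1) ℓ
          * (q ℓ j : k) ^ (sigmaExp (N j) (update a i (a i - 1) j)
            * tauExp (N ℓ) (update a i (a i - 1) ℓ))
        = (-1 : k) ^ a ℓ * (q ℓ j : k) ^ (sigmaExp (N j) (a j) * tauExp (N ℓ) (a ℓ)) :=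
    fun ℓ hℓ => by rw [update_of_ne (Finset.ne_of_mem_erase hℓ), update_of_ne hij.ne']
  rw [dCoeff, dCoeff, ← Finset.mul_prod_erase _ _ hmem, ← Finset.mul_prod_erase _ _ hmem,
    Finset.prod_congr rfl hrest, update_self, update_of_ne hij.ne', ht, Nat.add_sub_cancel,
    tauExp, tauExp, Finset.sum_range_succ, pow_succ, mul_add, pow_add]
  ring

/-- The coefficient of `d_i` on the basis element `x^b Φ(a)`. -/
noncomputable def diffCoeff (N : Fin θ → ℕ) (q : Fin θ → Fin θ → kˣ) (i : Fin θ)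
    (a b : Fin θ → ℕ) : k :=
  dCoeff k θ N q i a * QCI.reorderCoeff q i (sigmaExp (N i) (a i)) b

theorem diffCoeff_ne_zero (i : Fin θ) (a b : Fin θ → ℕ) : diffCoeff N q i a b ≠ 0 :=
  mul_ne_zero (dCoeff_ne_zero i a) (QCI.reorderCoeff_ne_zero i _ b)

theorem diffCoeff_anticomm {i j : Fin θ} (hij : i < j) {a : Fin θ → ℕ} (b : Fin θ → ℕ)
    (ha : a i ≠ 0) :
    diffCoeff N q i a b
        * diffCoeff N q j (update a i (a i - 1)) (update b i (b i + sigmaExp (N i) (a i)))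
      + diffCoeff N q j a b
        * diffCoeff N q i (update a j (a j - 1)) (update b j (b j + sigmaExp (N j) (a j)))
      = 0 := by
  have hflip := dCoeff_update_pred (k := k) (N := N) (q := q) hij ha
  simp only [diffCoeff, update_of_ne hij.ne', update_of_ne hij.ne,
    QCI.reorderCoeff_update_of_le hij.le, QCI.reorderCoeff_update_add_of_lt hij,
    dCoeff_update_of_lt hij]
  have hq : (q i j : k) ≠ 0 := Units.ne_zero _
  rw [← neg_eq_iff_eq_neg.mpr hflip, inv_pow, Nat.mul_comm (sigmaExp (N i) _)]
  field_simp
  ring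

theorem diffCoeff_cross_cancel {i j : Fin θ} (hij : i < j) (a b : Fin θ → ℕ)
    (hr : sigmaExp (N i) (a i + 1) ≤ b i) :
    (diffCoeff N q i (update a i (a i + 1)) (update b i (b i - sigmaExp (N i) (a i + 1))))⁻¹
        * diffCoeff N q j (update a i (a i + 1)) (update b i (b i - sigmaExp (N i) (a i + 1)))
      + diffCoeff N q j a b
        * (diffCoeff N q i (update (update a j (a j - 1)) i (a i + 1))
            (update (update b j (b j + sigmaExp (N j) (a j))) i
              (b i - sigmaExp (N i) (a i + 1))))⁻¹
      = 0 := by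
  have hanti := diffCoeff_anticomm (N := N) (q := q) hij (a := update a i (a i + 1))
    (update b i (b i - sigmaExp (N i) (a i + 1))) (by rw [update_self]; omega)
  simp only [update_self, update_idem, update_of_ne hij.ne', Nat.add_sub_cancel,
    Nat.sub_add_cancel hr, update_eq_self, update_comm hij.ne] at hanti
  have h1 := diffCoeff_ne_zero (N := N) (q := q) i (update a i (a i + 1))
    (update b i (b i - sigmaExp (N i) (a i + 1)))
  have h2 := diffCoeff_ne_zero (N := N) (q := q) i (update (update a j (a j - 1)) i (a i + 1))
    (update (update b j (b j + sigmaExp (N j) (a j))) i (b i - sigmaExp (N i) (a i + 1)))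
  field_simp
  linear_combination hanti

end Coefficients

namespace Idx

variable {θ n : ℕ}

theorem sum_update_add (a : Fin θ → ℕ) (i : Fin θ) (v : ℕ) :
    ∑ x, update a i v x + a i = ∑ x, a x + v := by
  rw [Finset.sum_update_of_mem (Finset.mem_univ i),
    Finset.sum_eq_add_sum_sdiff_singleton_of_mem (Finset.mem_univ i)]
  ring

def lower (a : Idx θ (n + 1)) (i : Fin θ) (h : a.1 i ≠ 0) : Idx θ n :=
  ⟨update a.1 i (a.1 i - 1), by have := sum_update_add a.1 i (a.1 i - 1); have := a.2; omega⟩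

def raise (a : Idx θ n) (i : Fin θ) : Idx θ (n + 1) :=
  ⟨update a.1 i (a.1 i + 1), by have := sum_update_add a.1 i (a.1 i + 1); have := a.2; omega⟩

theorem val_lower (a : Idx θ (n + 1)) (i : Fin θ) (h : a.1 i ≠ 0) :
    (lower a i h).1 = update a.1 i (a.1 i - 1) :=
  rfl

theorem val_raise (a : Idx θ n) (i : Fin θ) : (raise a i).1 = update a.1 i (a.1 i + 1) :=
  rfl

theorem raise_apply_self (a : Idx θ n) (i : Fin θ) : (raise a i).1 i = a.1 i + 1 :=
  update_self ..

theorem lower_apply_self (a : Idx θ (n + 1)) (i : Fin θ) (h : a.1 i ≠ 0) :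
    (lower a i h).1 i = a.1 i - 1 :=
  update_self ..

theorem raise_apply_of_ne (a : Idx θ n) {i j : Fin θ} (h : j ≠ i) : (raise a i).1 j = a.1 j :=
  update_of_ne h ..

theorem lower_apply_of_ne (a : Idx θ (n + 1)) {i j : Fin θ} (hi : a.1 i ≠ 0) (h : j ≠ i) :
    (lower a i hi).1 j = a.1 j :=
  update_of_ne h ..

theorem lower_raise (a : Idx θ n) (i : Fin θ) (h : (raise a i).1 i ≠ 0) :
    lower (raise a i) i h = a :=
  Subtype.ext (by simp [lower, raise])

theorem raise_lower (a : Idx θ (n + 1)) (i : Fin θ) (h : a.1 i ≠ 0) :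
    raise (lower a i h) i = a :=
  Subtype.ext (by simp [lower, raise, Nat.sub_add_cancel (Nat.one_le_iff_ne_zero.mpr h)])

theorem lower_raise_comm (a : Idx θ (n + 1)) {i j : Fin θ} (hij : i ≠ j) (h : a.1 j ≠ 0)
    (h' : (raise a i).1 j ≠ 0) :
    lower (raise a i) j h' = raise (lower a j h) i :=
  Subtype.ext (by simp [lower, raise, update_of_ne hij, update_of_ne hij.symm, update_comm hij])

theorem lower_lower_comm (a : Idx θ (n + 2)) {i j : Fin θ} (hij : i ≠ j) (hi : a.1 i ≠ 0)
    (hj : a.1 j ≠ 0) (hij' : (lower a i hi).1 j ≠ 0) (hji' : (lower a j hj).1 i ≠ 0) :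
    lower (lower a i hi) j hij' = lower (lower a j hj) i hji' :=
  Subtype.ext (by simp [lower, update_of_ne hij, update_of_ne hij.symm, update_comm hij])

theorem exists_ne_zero (a : Idx θ (n + 1)) : ∃ i, a.1 i ≠ 0 := by
  by_contra! h
  have := a.2
  simp [h] at this

theorem apply_eq_zero (a : Idx θ 0) (i : Fin θ) : a.1 i = 0 :=
  Finset.sum_eq_zero_iff.mp a.2 i (Finset.mem_univ i)

def zero : Idx θ 0 := ⟨0, Finset.sum_const_zero⟩

theorem eq_zero (a : Idx θ 0) : a = zero :=
  Subtype.ext (funext a.apply_eq_zero)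

end Idx

section Differential

variable {k : Type} [Field k] {θ : ℕ} {N : Fin θ → ℕ} {q : Fin θ → Fin θ → kˣ} {n : ℕ}

theorem dgr_single_of_eq_zero {i : Fin θ} {a : Idx θ (n + 1)} (h : a.1 i = 0)
    (s : QCI k θ N q) : dgr k θ N q i n (Finsupp.single a s) = 0 := by
  rw [dgr, Finsupp.lsum_single]
  erw [dif_pos h]
  rfl

theorem dgr_single {i : Fin θ} {a : Idx θ (n + 1)} (h : a.1 i ≠ 0) (s : QCI k θ N q) :
    dgr k θ N q i n (Finsupp.single a s)
      = Finsupp.single (a.lower i h)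
          (s * (algebraMap k _ (dCoeff k θ N q i a.1)
            * xgen k θ N q i ^ sigmaExp (N i) (a.1 i))) := by
  rw [dgr, Finsupp.lsum_single]
  erw [dif_neg h]
  rfl

theorem dgr_single_monomial {i : Fin θ} {a : Idx θ (n + 1)} (h : a.1 i ≠ 0) (b : Fin θ → ℕ) :
    dgr k θ N q i n (Finsupp.single a (QCI.monomial N q b))
      = diffCoeff N q i a.1 b • Finsupp.single (a.lower i h)
          (QCI.monomial N q (update b i (b i + sigmaExp (N i) (a.1 i)))) := by
  rw [dgr_single h, ← Algebra.smul_def, mul_smul_comm, QCI.monomial_mul_xgen_pow, smul_smul,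
    Finsupp.smul_single]
  rfl

theorem dgr_dgr_single_monomial_self (hN : ∀ i, N i ≠ 0) (i : Fin θ) (a : Idx θ (n + 2))
    (b : Fin θ → ℕ) :
    dgr k θ N q i n (dgr k θ N q i (n + 1) (Finsupp.single a (QCI.monomial N q b))) = 0 := by
  by_cases h : a.1 i = 0
  · rw [dgr_single_of_eq_zero h, map_zero]
  rw [dgr_single_monomial h, LinearMap.map_smul_of_tower]
  by_cases h' : (a.lower i h).1 i = 0
  · rw [dgr_single_of_eq_zero h', smul_zero]
  have hpair := sigmaExp_add_sigmaExp_succ (hN i) (a.1 i - 1)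
  rw [Nat.sub_add_cancel (Nat.one_le_iff_ne_zero.mpr h)] at hpair
  rw [dgr_single_monomial h', QCI.monomial_eq_zero (i := i), Finsupp.single_zero, smul_zero,
    smul_zero]
  rw [update_self, update_self, Idx.lower_apply_self]
  omega

theorem dgr_dgr_add_dgr_dgr_single_monomial {i j : Fin θ} (hij : i < j) (a : Idx θ (n + 2))
    (b : Fin θ → ℕ) :
    dgr k θ N q j n (dgr k θ N q i (n + 1) (Finsupp.single a (QCI.monomial N q b)))
      + dgr k θ N q i n (dgr k θ N q j (n + 1) (Finsupp.single a (QCI.monomial N q b))) = 0 := by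
  by_cases hi : a.1 i = 0
  · by_cases hj : a.1 j = 0
    · rw [dgr_single_of_eq_zero hi, dgr_single_of_eq_zero hj, map_zero, map_zero, add_zero]
    · rw [dgr_single_of_eq_zero hi, dgr_single_monomial hj, LinearMap.map_smul_of_tower,
        dgr_single_of_eq_zero (by rwa [Idx.lower_apply_of_ne _ hj hij.ne]), map_zero, smul_zero,
        add_zero]
  by_cases hj : a.1 j = 0
  · rw [dgr_single_of_eq_zero hj, dgr_single_monomial hi, LinearMap.map_smul_of_tower,
      dgr_single_of_eq_zero (by rwa [Idx.lower_apply_of_ne _ hi hij.ne']), map_zero, smul_zero,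
      add_zero]
  have hj' : (a.lower i hi).1 j ≠ 0 := by rwa [Idx.lower_apply_of_ne _ hi hij.ne']
  have hi' : (a.lower j hj).1 i ≠ 0 := by rwa [Idx.lower_apply_of_ne _ hj hij.ne]
  rw [dgr_single_monomial hi, dgr_single_monomial hj, LinearMap.map_smul_of_tower,
    LinearMap.map_smul_of_tower, dgr_single_monomial hj', dgr_single_monomial hi',
    Idx.lower_lower_comm a hij.ne hi hj hj' hi', smul_smul, smul_smul]
  simp only [Idx.val_lower, update_of_ne hij.ne, update_of_ne hij.ne']
  rw [update_comm hij.ne', ← add_smul, diffCoeff_anticomm hij b hi, zero_smul]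

end Differential

section Homotopy

variable {k : Type} [Field k] {θ : ℕ} {N : Fin θ → ℕ} {q : Fin θ → Fin θ → kˣ} {n : ℕ}

/-- The paper's `s_i`, on the basis element `x^b Φ(a)`. -/
noncomputable def homotopyStep (N : Fin θ → ℕ) (q : Fin θ → Fin θ → kˣ) (a : Idx θ n)
    (b : Fin θ → ℕ) (i : Fin θ) : KnMod k θ N q (n + 1) :=
  if sigmaExp (N i) (a.1 i + 1) ≤ b i then
    (diffCoeff N q i (a.raise i).1 (update b i (b i - sigmaExp (N i) (a.1 i + 1))))⁻¹ •
      Finsupp.single (a.raise i)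
        (QCI.monomial N q (update b i (b i - sigmaExp (N i) (a.1 i + 1))))
  else 0

def IsFirstActive (a b : Fin θ → ℕ) (i : Fin θ) : Prop :=
  (a i ≠ 0 ∨ b i ≠ 0) ∧ ∀ ℓ < i, a ℓ = 0 ∧ b ℓ = 0

theorem IsFirstActive.update_of_lt {a b : Fin θ → ℕ} {i j : Fin θ} (h : IsFirstActive a b i)
    (hij : i < j) (u v : ℕ) : IsFirstActive (update a j u) (update b j v) i := by
  refine ⟨by rw [update_of_ne hij.ne, update_of_ne hij.ne]; exact h.1, fun ℓ hℓ => ?_⟩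
  rw [update_of_ne (hℓ.trans hij).ne, update_of_ne (hℓ.trans hij).ne]
  exact h.2 ℓ hℓ

theorem IsFirstActive.update_self {a b : Fin θ → ℕ} {i : Fin θ} (h : IsFirstActive a b i)
    (u : ℕ) {v : ℕ} (hv : v ≠ 0) : IsFirstActive (update a i u) (update b i v) i := by
  refine ⟨Or.inr (by rwa [Function.update_self]), fun ℓ hℓ => ?_⟩
  rw [update_of_ne hℓ.ne, update_of_ne hℓ.ne]
  exact h.2 ℓ hℓ

noncomputable def homotopyOnBasis (N : Fin θ → ℕ) (q : Fin θ → Fin θ → kˣ) (a : Idx θ n)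
    (b : Fin θ → ℕ) : KnMod k θ N q (n + 1) :=
  if h : ∃ i, a.1 i ≠ 0 ∨ b i ≠ 0 then homotopyStep N q a b (Fin.find _ h) else 0

theorem exists_isFirstActive {a b : Fin θ → ℕ} (h : ∃ i, a i ≠ 0 ∨ b i ≠ 0) :
    ∃ i, IsFirstActive a b i :=
  ⟨Fin.find _ h, Fin.find_spec h, fun ℓ hℓ => by simpa using Fin.find_min h hℓ⟩

theorem homotopyOnBasis_of_isFirstActive {a : Idx θ n} {b : Fin θ → ℕ} {i : Fin θ}
    (h : IsFirstActive a.1 b i) : homotopyOnBasis N q a b = homotopyStep N q a b i := by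
  rw [homotopyOnBasis, dif_pos ⟨i, h.1⟩, (Fin.find_eq_iff _).mpr ⟨h.1, fun ℓ hℓ => ?_⟩]
  simp [h.2 ℓ hℓ]

/-- Unlike `d`, the contracting homotopy is only `k`-linear: it is defined on a `k`-basis. -/
noncomputable def homotopy (hN : ∀ i, N i ≠ 0) (n : ℕ) :
    KnMod k θ N q n →ₗ[k] KnMod k θ N q (n + 1) :=
  Finsupp.lsum k fun a =>
    (QCI.monomialBasis hN).constr k fun c => homotopyOnBasis N q a fun i => c i

theorem homotopy_single_monomial (hN : ∀ i, N i ≠ 0) (a : Idx θ n) {b : Fin θ → ℕ}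
    (hb : ∀ i, b i < N i) :
    homotopy hN n (Finsupp.single a (QCI.monomial N q b)) = homotopyOnBasis N q a b := by
  rw [homotopy, Finsupp.lsum_single, ← QCI.monomialBasis_apply hN fun i => ⟨b i, hb i⟩,
    Module.Basis.constr_basis]

theorem homotopy_single_monomial_of_isFirstActive (hN : ∀ i, N i ≠ 0) {a : Idx θ n}
    {b : Fin θ → ℕ} {i : Fin θ} (hi : IsFirstActive a.1 b i) (hbi : b i < N i) :
    homotopy hN n (Finsupp.single a (QCI.monomial N q b)) = homotopyStep N q a b i := by
  by_cases hb : ∀ j, b j < N j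
  · rw [homotopy_single_monomial hN a hb, homotopyOnBasis_of_isFirstActive hi]
  obtain ⟨j, hj⟩ := not_forall.mp hb
  have hji : j ≠ i := by rintro rfl; exact hj hbi
  rw [QCI.monomial_eq_zero (not_lt.mp hj), Finsupp.single_zero, map_zero, homotopyStep]
  split_ifs
  · rw [QCI.monomial_eq_zero (i := j) (by rw [update_of_ne hji]; omega), Finsupp.single_zero,
      smul_zero]
  · rfl

theorem dgr_homotopyStep_self {a : Idx θ n} {b : Fin θ → ℕ} {i : Fin θ}
    (hr : sigmaExp (N i) (a.1 i + 1) ≤ b i) :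
    dgr k θ N q i n (homotopyStep N q a b i) = Finsupp.single a (QCI.monomial N q b) := by
  rw [homotopyStep, if_pos hr, LinearMap.map_smul_of_tower,
    dgr_single_monomial (by rw [Idx.raise_apply_self]; omega), Idx.lower_raise, smul_smul,
    inv_mul_cancel₀ (diffCoeff_ne_zero _ _ _), one_smul]
  simp only [Idx.raise_apply_self, update_self, update_idem, Nat.sub_add_cancel hr,
    update_eq_self]

theorem dgr_homotopyStep_of_eq_zero {a : Idx θ n} {b : Fin θ → ℕ} {i j : Fin θ} (hji : j ≠ i)
    (ha : a.1 j = 0) : dgr k θ N q j n (homotopyStep N q a b i) = 0 := by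
  rw [homotopyStep]
  split_ifs
  · rw [LinearMap.map_smul_of_tower,
      dgr_single_of_eq_zero (by rwa [Idx.raise_apply_of_ne _ hji]), smul_zero]
  · rw [map_zero]

theorem dgr_homotopy_add_homotopy_dgr_self (hN : ∀ i, N i ≠ 0) {i : Fin θ} (hNi : 2 ≤ N i)
    {a : Idx θ (n + 1)} {b : Fin θ → ℕ} (hb : ∀ i, b i < N i) (hi : IsFirstActive a.1 b i) :
    dgr k θ N q i (n + 1) (homotopy hN (n + 1) (Finsupp.single a (QCI.monomial N q b)))
      + homotopy hN n (dgr k θ N q i n (Finsupp.single a (QCI.monomial N q b)))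
      = Finsupp.single a (QCI.monomial N q b) := by
  have hpair := sigmaExp_add_sigmaExp_succ (hN i) (a.1 i)
  rw [homotopy_single_monomial_of_isFirstActive hN hi (hb i)]
  by_cases hr : sigmaExp (N i) (a.1 i + 1) ≤ b i
  · rw [dgr_homotopyStep_self hr]
    by_cases ha : a.1 i = 0
    · rw [dgr_single_of_eq_zero ha, map_zero, add_zero]
    · -- `σ_i(a_i) + σ_i(a_i + 1) = N_i`
      have hvanish : QCI.monomial N q (update b i (b i + sigmaExp (N i) (a.1 i))) = 0 :=
        QCI.monomial_eq_zero (i := i) (by rw [update_self]; omega)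
      rw [dgr_single_monomial ha, hvanish, Finsupp.single_zero, smul_zero, map_zero, add_zero]
  · have ha : a.1 i ≠ 0 := by
      intro ha
      rcases hi.1 with h | h
      · exact h ha
      · rw [ha, zero_add, sigmaExp_one] at hr
        omega
    have hσ := one_le_sigmaExp hNi (a.1 i)
    have ha' : (a.lower i ha).1 i + 1 = a.1 i := by
      rw [Idx.lower_apply_self]
      omega
    rw [homotopyStep, if_neg hr, map_zero, zero_add, dgr_single_monomial ha,
      LinearMap.map_smul_of_tower,
      homotopy_single_monomial_of_isFirstActive hN (hi.update_self _ (by omega))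
        (by rw [update_self]; omega),
      homotopyStep, if_pos (by rw [ha', update_self]; omega)]
    simp only [ha', Idx.raise_lower, update_self, update_idem, Nat.add_sub_cancel, update_eq_self]
    rw [smul_smul, mul_inv_cancel₀ (diffCoeff_ne_zero _ _ _), one_smul]

theorem dgr_homotopy_add_homotopy_dgr_of_ne (hN : ∀ i, N i ≠ 0) {a : Idx θ (n + 1)}
    {b : Fin θ → ℕ} (hb : ∀ i, b i < N i) {i j : Fin θ} (hi : IsFirstActive a.1 b i)
    (hji : j ≠ i) :
    dgr k θ N q j (n + 1) (homotopy hN (n + 1) (Finsupp.single a (QCI.monomial N q b)))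
      + homotopy hN n (dgr k θ N q j n (Finsupp.single a (QCI.monomial N q b))) = 0 := by
  rw [homotopy_single_monomial_of_isFirstActive hN hi (hb i)]
  by_cases ha : a.1 j = 0
  · rw [dgr_single_of_eq_zero ha, map_zero, add_zero, dgr_homotopyStep_of_eq_zero hji ha]
  have hij : i < j := lt_of_le_of_ne (not_lt.mp fun h => ha (hi.2 j h).1) hji.symm
  rw [dgr_single_monomial ha, LinearMap.map_smul_of_tower,
    homotopy_single_monomial_of_isFirstActive hN (hi.update_of_lt hij _ _)
      (by rw [update_of_ne hij.ne]; exact hb i)]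
  simp only [homotopyStep, Idx.lower_apply_of_ne _ ha hij.ne, update_of_ne hij.ne]
  split_ifs with hr
  swap
  · rw [map_zero, smul_zero, add_zero]
  have hj' : (a.raise i).1 j ≠ 0 := by rwa [Idx.raise_apply_of_ne _ hji]
  rw [LinearMap.map_smul_of_tower, dgr_single_monomial hj', smul_smul, smul_smul,
    Idx.lower_raise_comm a hij.ne ha hj']
  simp only [Idx.val_raise, Idx.val_lower, update_of_ne hji, update_of_ne hij.ne,
    update_comm hij.ne]
  rw [← add_smul, diffCoeff_cross_cancel hij a.1 b hr, zero_smul]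

end Homotopy

section Resolution

variable {k : Type} [Field k] {θ : ℕ} {N : Fin θ → ℕ} {q : Fin θ → Fin θ → kˣ} {n : ℕ}

theorem KnMod.linearMap_ext_monomial {M : Type*} [AddCommMonoid M] [Module k M]
    (hN : ∀ i, N i ≠ 0) {f g : KnMod k θ N q n →ₗ[k] M}
    (h : ∀ a (b : Fin θ → ℕ), (∀ i, b i < N i) →
      f (Finsupp.single a (QCI.monomial N q b)) = g (Finsupp.single a (QCI.monomial N q b))) :
    f = g :=
  Finsupp.lhom_ext' fun a => (QCI.monomialBasis hN).ext fun c => by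
    simpa [QCI.monomialBasis_apply] using h a (fun i => c i) fun i => (c i).isLt

theorem dTot_dTot_single_monomial (hN : ∀ i, N i ≠ 0) (a : Idx θ (n + 2)) (b : Fin θ → ℕ) :
    dTot k θ N q n (dTot k θ N q (n + 1) (Finsupp.single a (QCI.monomial N q b))) = 0 := by
  simp only [dTot, LinearMap.sum_apply, map_sum]
  exact Finset.sum_sum_eq_zero_of_antisymm
    (fun i j => dgr k θ N q j n (dgr k θ N q i (n + 1) (Finsupp.single a (QCI.monomial N q b))))
    (fun i => dgr_dgr_single_monomial_self hN i a b)
    fun i j hij => dgr_dgr_add_dgr_dgr_single_monomial hij a b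

theorem dTot_dTot (hN : ∀ i, N i ≠ 0) (y : KnMod k θ N q (n + 2)) :
    dTot k θ N q n (dTot k θ N q (n + 1) y) = 0 := by
  suffices ((dTot k θ N q n).restrictScalars k).comp ((dTot k θ N q (n + 1)).restrictScalars k)
      = (0 : KnMod k θ N q (n + 2) →ₗ[k] KnMod k θ N q n) from LinearMap.congr_fun this y
  exact KnMod.linearMap_ext_monomial hN fun a b _ => dTot_dTot_single_monomial hN a b

theorem dTot_homotopy_add_homotopy_dTot_single_monomial (hN : ∀ i, 2 ≤ N i) (a : Idx θ (n + 1))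
    {b : Fin θ → ℕ} (hb : ∀ i, b i < N i) :
    dTot k θ N q (n + 1)
        (homotopy (fun i => Nat.ne_zero_of_lt (hN i)) (n + 1)
          (Finsupp.single a (QCI.monomial N q b)))
      + homotopy (fun i => Nat.ne_zero_of_lt (hN i)) n
          (dTot k θ N q n (Finsupp.single a (QCI.monomial N q b)))
      = Finsupp.single a (QCI.monomial N q b) := by
  obtain ⟨j, hj⟩ := a.exists_ne_zero
  obtain ⟨i, hi⟩ := exists_isFirstActive ⟨j, Or.inl hj⟩
  simp only [dTot, LinearMap.sum_apply, map_sum, ← Finset.sum_add_distrib]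
  rw [Finset.sum_eq_single i (fun j _ hji => dgr_homotopy_add_homotopy_dgr_of_ne _ hb hi hji)
    (by simp)]
  exact dgr_homotopy_add_homotopy_dgr_self _ (hN i) hb hi

theorem dTot_homotopy_add_homotopy_dTot (hN : ∀ i, 2 ≤ N i) (y : KnMod k θ N q (n + 1)) :
    dTot k θ N q (n + 1) (homotopy (fun i => Nat.ne_zero_of_lt (hN i)) (n + 1) y)
      + homotopy (fun i => Nat.ne_zero_of_lt (hN i)) n (dTot k θ N q n y) = y := by
  suffices ((dTot k θ N q (n + 1)).restrictScalars k).comp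
        (homotopy (fun i => Nat.ne_zero_of_lt (hN i)) (n + 1))
      + (homotopy (fun i => Nat.ne_zero_of_lt (hN i)) n).comp
        ((dTot k θ N q n).restrictScalars k) = LinearMap.id from LinearMap.congr_fun this y
  exact KnMod.linearMap_ext_monomial (fun i => Nat.ne_zero_of_lt (hN i)) fun a b hb =>
    dTot_homotopy_add_homotopy_dTot_single_monomial hN a hb

theorem qciAug_xgen (hN : ∀ i, N i ≠ 0) (i : Fin θ) : qciAug k θ N q hN (xgen k θ N q i) = 0 := by
  rw [qciAug, xgen, RingQuot.liftAlgHom_mkAlgHom_apply, FreeAlgebra.lift_ι_apply]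

theorem qciAug_monomial_of_ne_zero (hN : ∀ i, N i ≠ 0) {b : Fin θ → ℕ} {i : Fin θ}
    (h : b i ≠ 0) : qciAug k θ N q hN (QCI.monomial N q b) = 0 := by
  rw [QCI.monomial, map_list_prod, List.map_map]
  exact List.prod_eq_zero (List.mem_map.mpr ⟨i, List.mem_finRange i, by simp [qciAug_xgen, h]⟩)

noncomputable def augmentation (hN : ∀ i, N i ≠ 0) : KnMod k θ N q 0 →ₗ[k] k :=
  Finsupp.lsum k fun _ => (qciAug k θ N q hN).toLinearMap

theorem augmentation_single (hN : ∀ i, N i ≠ 0) (a : Idx θ 0) (s : QCI k θ N q) :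
    augmentation hN (Finsupp.single a s) = qciAug k θ N q hN s :=
  Finsupp.lsum_single ..

theorem augmentation_dTot (hN : ∀ i, 2 ≤ N i) (y : KnMod k θ N q 1) :
    augmentation (fun i => Nat.ne_zero_of_lt (hN i)) (dTot k θ N q 0 y) = 0 := by
  induction y using Finsupp.induction_linear with
  | zero => simp
  | add y z hy hz => rw [map_add, map_add, hy, hz, add_zero]
  | single a s =>
    rw [dTot, LinearMap.sum_apply, map_sum]
    refine Finset.sum_eq_zero fun j _ => ?_
    by_cases ha : a.1 j = 0
    · rw [dgr_single_of_eq_zero ha, map_zero]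
    · rw [dgr_single ha, augmentation_single, map_mul, map_mul, map_pow, qciAug_xgen,
        zero_pow (Nat.one_le_iff_ne_zero.mp (one_le_sigmaExp (hN j) _)), mul_zero, mul_zero]

theorem dTot_homotopy_add_augmentation_single_monomial (hN : ∀ i, 2 ≤ N i) (a : Idx θ 0)
    {b : Fin θ → ℕ} (hb : ∀ i, b i < N i) :
    dTot k θ N q 0 (homotopy (fun i => Nat.ne_zero_of_lt (hN i)) 0
        (Finsupp.single a (QCI.monomial N q b)))
      + Finsupp.single a (algebraMap k (QCI k θ N q) (augmentation
          (fun i => Nat.ne_zero_of_lt (hN i)) (Finsupp.single a (QCI.monomial N q b))))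
      = Finsupp.single a (QCI.monomial N q b) := by
  by_cases hb0 : ∃ i, b i ≠ 0
  · obtain ⟨i, hi⟩ := exists_isFirstActive (a := a.1) (b := b) (hb0.imp fun _ => Or.inr)
    have hbi : b i ≠ 0 := hi.1.resolve_left (not_not.mpr (a.apply_eq_zero i))
    rw [augmentation_single, qciAug_monomial_of_ne_zero _ hbi, map_zero, Finsupp.single_zero,
      add_zero, homotopy_single_monomial_of_isFirstActive _ hi (hb i), dTot, LinearMap.sum_apply,
      Finset.sum_eq_single i (fun j _ hji => dgr_homotopyStep_of_eq_zero hji (a.apply_eq_zero j))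
        (by simp)]
    exact dgr_homotopyStep_self (by rw [a.apply_eq_zero i, zero_add, sigmaExp_one]; omega)
  · obtain rfl : b = 0 := funext (by simpa using hb0)
    rw [homotopy_single_monomial _ a hb, homotopyOnBasis, dif_neg (by simp [a.apply_eq_zero]),
      map_zero, zero_add, augmentation_single, QCI.monomial_zero, map_one, map_one]

theorem dTot_homotopy_add_augmentation (hN : ∀ i, 2 ≤ N i) (y : KnMod k θ N q 0) :
    dTot k θ N q 0 (homotopy (fun i => Nat.ne_zero_of_lt (hN i)) 0 y)
      + Finsupp.single Idx.zero (algebraMap k (QCI k θ N q)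
          (augmentation (fun i => Nat.ne_zero_of_lt (hN i)) y)) = y := by
  suffices ((dTot k θ N q 0).restrictScalars k).comp
        (homotopy (fun i => Nat.ne_zero_of_lt (hN i)) 0)
      + (Finsupp.lsingle Idx.zero).comp ((Algebra.linearMap k (QCI k θ N q)).comp
        (augmentation (fun i => Nat.ne_zero_of_lt (hN i)))) = LinearMap.id
    from LinearMap.congr_fun this y
  refine KnMod.linearMap_ext_monomial (fun i => Nat.ne_zero_of_lt (hN i)) fun a b hb => ?_
  obtain rfl := a.eq_zero
  exact dTot_homotopy_add_augmentation_single_monomial hN _ hb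

end Resolution

theorem koszul_complex_is_free_resolution (hN : ∀ i, 2 ≤ N i) :
    letI S := QCI k θ N q
    letI : Module S k :=
      Module.compHom k (qciAug k θ N q (fun i => by have := hN i; omega)).toRingHom
    letI εmod : KnMod k θ N q 0 →ₗ[S] k :=
      Finsupp.lsum ℕ fun _ =>
        { toFun := qciAug k θ N q (fun i => by have := hN i; omega)
          map_add' := fun a b => map_add _ a b
          map_smul' := fun a b => by
            simp only [smul_eq_mul, map_mul, RingHom.id_apply]; rfl }
    -- each term is a free `S`-module,
    (∀ n, Module.Free S (KnMod k θ N q n)) ∧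
    -- the augmented complex is exact, i.e. `K_•` is a free resolution of `k`
    Function.Surjective εmod ∧
    Function.Exact (dTot k θ N q 0) εmod ∧
    (∀ n, Function.Exact (dTot k θ N q (n + 1)) (dTot k θ N q n)) := by
  have hN' : ∀ i, N i ≠ 0 := fun i => Nat.ne_zero_of_lt (hN i)
  refine ⟨fun n => inferInstance, fun c => ⟨Finsupp.single Idx.zero (algebraMap k _ c), ?_⟩,
    ?_, fun n => ?_⟩
  · exact (augmentation_single hN' _ _).trans ((qciAug k θ N q hN').commutes c)
  · exact (Function.Exact.of_homotopy (augmentation_dTot hN) (homotopy hN' 0)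
      (fun c => Finsupp.single Idx.zero (algebraMap k _ c)) (by simp)
      (dTot_homotopy_add_augmentation hN) : Function.Exact _ (augmentation hN'))
  · exact .of_homotopy (dTot_dTot hN') (homotopy hN' (n + 1)) (homotopy hN' n) (map_zero _)
      (dTot_homotopy_add_homotopy_dTot hN)
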